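/- arXiv:2108.03663 — 2 statements merged into one kernel-verified Lean document; each statement's English description precedes it below -/
import Mathlib

section
/- Let f be a continuous function on the torus [-π,π] (with endpoints identified) that is strictly positive except at finitely many distinct points E_1,...,E_M, and suppose that for each i there exists β_i > 0 such that the limit lim_{x→E_i, x≠E_i} f(x)/|x−E_i|^{β_i} exists and is strictly positive. Then there exist constants 0 < c ≤ C such that for all x ∈ [-π,π], c·∏_{i=1}^M (2−2cos(x−E_i))^{b/2} ≤ f(x) ≤ C·(2−2cos(x−E_{i_0}))^{b/2}, where b = max_i β_i and i_0 is an index with β_{i_0} = b. -/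
/-!
With `φ t = 2 - 2 cos t` one has `(2/π)² t² ≤ φ t ≤ t²` for `|t| ≤ π`. Near a zero `E i` the
hypothesis `f x ~ c'_i |x - E i|^{β_i}` therefore compares `f` with `φ (x - E i)^{β_i/2}`: since
`β_i ≤ b`, `|x - E i| ≤ 1` and the other factors are bounded, `c ∏_j φ (x - E j)^{b/2} ≤ f` near
`E i`, and `f ≤ C φ (x - E i0)^{b/2}` near `E i0`. Away from these points one side of each
inequality is positive and both are continuous, so the bounds hold locally there too; a finite
subcover of `[-π, π]` makes the constants global. Periodicity rules out `E i0 = -π`, which would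
make `φ (x - E i0)` vanish at `x = π` as well.
-/

open Real Filter Set Topology

lemma two_sub_two_mul_cos_nonneg (t : ℝ) : 0 ≤ 2 - 2 * cos t := by
  linarith [cos_le_one t]

lemma two_sub_two_mul_cos_eq_zero_iff {t : ℝ} (ht : |t| < 2 * π) :
    2 - 2 * cos t = 0 ↔ t = 0 := by
  rw [abs_lt] at ht
  rw [← cos_eq_one_iff_of_lt_of_lt ht.1 ht.2]
  constructor <;> intro h <;> linarith

lemma sq_rpow_div_two (t b : ℝ) : (t ^ 2) ^ (b / 2) = |t| ^ b := by
  rw [← sq_abs, ← rpow_natCast_mul (abs_nonneg t)]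
  congr 1
  push_cast
  ring

lemma two_sub_two_mul_cos_rpow_le (t : ℝ) {b : ℝ} (hb : 0 ≤ b) :
    (2 - 2 * cos t) ^ (b / 2) ≤ |t| ^ b := by
  rw [← sq_rpow_div_two]
  have := one_sub_sq_div_two_le_cos (x := t)
  exact rpow_le_rpow (two_sub_two_mul_cos_nonneg t) (by linarith) (by positivity)

lemma mul_rpow_le_two_sub_two_mul_cos_rpow {t : ℝ} (ht : |t| ≤ π) {b : ℝ} (hb : 0 ≤ b) :
    (2 / π) ^ b * |t| ^ b ≤ (2 - 2 * cos t) ^ (b / 2) := by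
  have hπ := pi_pos
  rw [← mul_rpow (by positivity) (abs_nonneg t), ← abs_of_pos (by positivity : 0 < 2 / π),
    ← abs_mul, ← sq_rpow_div_two]
  have := cos_le_one_sub_mul_cos_sq ht
  refine rpow_le_rpow (sq_nonneg _) ?_ (by positivity)
  have : (2 / π * t) ^ 2 = 2 * (2 / π ^ 2 * t ^ 2) := by ring
  linarith

lemma IsCompact.exists_pos_forall_mul_le {X : Type*} [TopologicalSpace X] {K : Set X}
    (hK : IsCompact K) {f g : X → ℝ} (hg : ∀ x ∈ K, 0 ≤ g x)
    (h : ∀ x ∈ K, ∃ c > 0, ∀ᶠ y in 𝓝 x, c * g y ≤ f y) :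
    ∃ c > 0, ∀ x ∈ K, c * g x ≤ f x := by
  choose! c hc hev using h
  obtain ⟨t, htK, hcov⟩ := hK.elim_nhds_subcover (fun x => {y | c x * g y ≤ f y}) hev
  rcases t.eq_empty_or_nonempty with rfl | ht
  · exact ⟨1, one_pos, fun x hx => by simpa using hcov hx⟩
  refine ⟨t.inf' ht c, (Finset.lt_inf'_iff ht).mpr fun z hz => hc z (htK z hz), fun x hx => ?_⟩
  obtain ⟨z, hz, hxz⟩ := mem_iUnion₂.mp (hcov hx)
  exact (mul_le_mul_of_nonneg_right (Finset.inf'_le c hz) (hg x hx)).trans hxz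

lemma exists_pos_eventually_mul_le_of_pos {X : Type*} [TopologicalSpace X] {u v : X → ℝ}
    {x : X} (hu : ContinuousAt u x) (hv : ContinuousAt v x) (hvx : 0 < v x) :
    ∃ c > 0, ∀ᶠ y in 𝓝 x, c * u y ≤ v y := by
  have hB : 0 < |u x| + 1 := by positivity
  refine ⟨v x / 2 / (|u x| + 1), by positivity, ?_⟩
  filter_upwards [hu.eventually (eventually_lt_nhds ((le_abs_self _).trans_lt (lt_add_one _))),
    hv.eventually (eventually_gt_nhds (half_lt_self hvx))] with y hyu hyv
  calc v x / 2 / (|u x| + 1) * u y ≤ v x / 2 / (|u x| + 1) * (|u x| + 1) := by gcongr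
    _ = v x / 2 := div_mul_cancel₀ _ hB.ne'
    _ ≤ v y := hyv.le

lemma eventually_mul_rpow_le_and_le_mul_rpow {f : ℝ → ℝ} {e β a c d : ℝ} (hβ : β ≠ 0)
    (hfe : f e = 0) (h : Tendsto (fun x => f x / |x - e| ^ β) (𝓝[≠] e) (𝓝 c))
    (ha : a < c) (hd : c < d) :
    ∀ᶠ y in 𝓝 e, a * |y - e| ^ β ≤ f y ∧ f y ≤ d * |y - e| ^ β := by
  rw [← nhdsNE_sup_pure, eventually_sup, eventually_pure, sub_self, abs_zero, zero_rpow hβ, hfe]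
  refine ⟨?_, by simp⟩
  filter_upwards [h (Ioo_mem_nhds ha hd), self_mem_nhdsWithin] with y hy hne
  have hp : 0 < |y - e| ^ β := rpow_pos_of_pos (abs_pos.mpr (sub_ne_zero.mpr hne)) _
  rw [mem_preimage, mem_Ioo, lt_div_iff₀ hp, div_lt_iff₀ hp] at hy
  exact ⟨hy.1.le, hy.2.le⟩

lemma exists_pos_eventually_mul_prod_le {ι : Type*} [Fintype ι] {f : ℝ → ℝ} {E : ι → ℝ}
    {β b a : ℝ} (i : ι) (hβ : 0 ≤ β) (hβb : β ≤ b) (ha : 0 < a)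
    (hf : ∀ᶠ y in 𝓝 (E i), a * |y - E i| ^ β ≤ f y) :
    ∃ c > 0, ∀ᶠ y in 𝓝 (E i), c * ∏ j, (2 - 2 * cos (y - E j)) ^ (b / 2) ≤ f y := by
  classical
  have hb : 0 ≤ b := hβ.trans hβb
  set B : ℝ := (4 : ℝ) ^ (b / 2)
  set N := (Finset.univ.erase i).card
  have hB : 0 < B := by positivity
  refine ⟨a / B ^ N, by positivity, ?_⟩
  filter_upwards [hf, eventually_abs_sub_lt (E i) one_pos] with y hfy hy
  have hnonneg : ∀ j, 0 ≤ (2 - 2 * cos (y - E j)) ^ (b / 2) := fun j =>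
    rpow_nonneg (two_sub_two_mul_cos_nonneg _) _
  have hfactor : ∀ j, (2 - 2 * cos (y - E j)) ^ (b / 2) ≤ B := fun j =>
    rpow_le_rpow (two_sub_two_mul_cos_nonneg _) (by linarith [neg_one_le_cos (y - E j)])
      (by positivity)
  have hi : (2 - 2 * cos (y - E i)) ^ (b / 2) ≤ |y - E i| ^ β :=
    (two_sub_two_mul_cos_rpow_le _ hb).trans
      (rpow_le_rpow_of_exponent_ge' (abs_nonneg _) hy.le hβ hβb)
  have hprod : ∏ j, (2 - 2 * cos (y - E j)) ^ (b / 2) ≤ |y - E i| ^ β * B ^ N := by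
    rw [← Finset.mul_prod_erase _ _ (Finset.mem_univ i), ← Finset.prod_const B]
    exact mul_le_mul hi (Finset.prod_le_prod (fun j _ => hnonneg j) fun j _ => hfactor j)
      (Finset.prod_nonneg fun j _ => hnonneg j) (by positivity)
  calc a / B ^ N * ∏ j, (2 - 2 * cos (y - E j)) ^ (b / 2)
      ≤ a / B ^ N * (|y - E i| ^ β * B ^ N) := by gcongr
    _ = a * |y - E i| ^ β := by field_simp
    _ ≤ f y := hfy

lemma exists_pos_eventually_mul_le_two_sub_two_mul_cos_rpow {f : ℝ → ℝ} {e b d : ℝ}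
    (hb : 0 ≤ b) (hd : 0 < d) (hf : ∀ᶠ y in 𝓝 e, f y ≤ d * |y - e| ^ b) :
    ∃ c > 0, ∀ᶠ y in 𝓝 e, c * f y ≤ (2 - 2 * cos (y - e)) ^ (b / 2) := by
  have hπ := pi_pos
  refine ⟨(2 / π) ^ b / d, by positivity, ?_⟩
  filter_upwards [hf, eventually_abs_sub_lt e hπ] with y hfy hy
  calc (2 / π) ^ b / d * f y ≤ (2 / π) ^ b / d * (d * |y - e| ^ b) := by gcongr
    _ = (2 / π) ^ b * |y - e| ^ b := by field_simp
    _ ≤ _ := mul_rpow_le_two_sub_two_mul_cos_rpow hy.le hb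

lemma continuous_two_sub_two_mul_cos_rpow (e : ℝ) {b : ℝ} (hb : 0 ≤ b) :
    Continuous fun x => (2 - 2 * cos (x - e)) ^ (b / 2) :=
  (by fun_prop : Continuous fun x => 2 - 2 * cos (x - e)).rpow_const
    fun _ => Or.inr (by positivity)

lemma exists_pos_forall_mul_prod_le {ι : Type*} [Fintype ι] {f : ℝ → ℝ} {K : Set ℝ}
    {E β c' : ι → ℝ} {b : ℝ} (hK : IsCompact K) (hcont : Continuous f)
    (hzero : ∀ i, f (E i) = 0) (hpos : ∀ x ∈ K, x ∉ range E → 0 < f x)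
    (hβ : ∀ i, 0 < β i) (hβb : ∀ i, β i ≤ b) (hb : 0 ≤ b) (hc' : ∀ i, 0 < c' i)
    (hlim : ∀ i, Tendsto (fun x => f x / |x - E i| ^ β i) (𝓝[≠] E i) (𝓝 (c' i))) :
    ∃ c > 0, ∀ x ∈ K, c * ∏ i, (2 - 2 * cos (x - E i)) ^ (b / 2) ≤ f x := by
  refine hK.exists_pos_forall_mul_le
    (fun x _ => Finset.prod_nonneg fun i _ => rpow_nonneg (two_sub_two_mul_cos_nonneg _) _)
    fun x hx => ?_
  by_cases hxE : x ∈ range E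
  · obtain ⟨i, rfl⟩ := hxE
    have hnear := eventually_mul_rpow_le_and_le_mul_rpow (hβ i).ne' (hzero i) (hlim i)
      (half_lt_self (hc' i)) (lt_add_one _)
    exact exists_pos_eventually_mul_prod_le i (hβ i).le (hβb i) (half_pos (hc' i))
      (hnear.mono fun _ h => h.1)
  · have hprod : Continuous fun x => ∏ i, (2 - 2 * cos (x - E i)) ^ (b / 2) :=
      continuous_finsetProd _ fun i _ => continuous_two_sub_two_mul_cos_rpow (E i) hb
    exact exists_pos_eventually_mul_le_of_pos hprod.continuousAt hcont.continuousAt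
      (hpos x hx hxE)

lemma exists_forall_le_mul_two_sub_two_mul_cos_rpow {f : ℝ → ℝ} {e b c' : ℝ}
    (hcont : Continuous f) (hf : ∀ x ∈ Icc (-π) π, 0 ≤ f x) (he : e ∈ Ioo (-π) π)
    (hfe : f e = 0) (hb : 0 < b)
    (hlim : Tendsto (fun x => f x / |x - e| ^ b) (𝓝[≠] e) (𝓝 c')) :
    ∃ C, ∀ x ∈ Icc (-π) π, f x ≤ C * (2 - 2 * cos (x - e)) ^ (b / 2) := by
  obtain ⟨c, hc, hcf⟩ := isCompact_Icc.exists_pos_forall_mul_le hf fun x hx => by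
    rcases eq_or_ne x e with rfl | hne
    · have hnear := eventually_mul_rpow_le_and_le_mul_rpow hb.ne' hfe hlim
        (sub_one_lt c') ((le_abs_self c').trans_lt (lt_add_one _))
      exact exists_pos_eventually_mul_le_two_sub_two_mul_cos_rpow hb.le (by positivity)
        (hnear.mono fun _ h => h.2)
    · have hdist : |x - e| < 2 * π := by
        rw [abs_lt]
        constructor <;> linarith [hx.1, hx.2, he.1, he.2]
      have hbase : 0 < 2 - 2 * cos (x - e) := (two_sub_two_mul_cos_nonneg _).lt_of_ne
        fun h => hne (sub_eq_zero.mp ((two_sub_two_mul_cos_eq_zero_iff hdist).mp h.symm))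
      exact exists_pos_eventually_mul_le_of_pos hcont.continuousAt
        (continuous_two_sub_two_mul_cos_rpow e hb.le).continuousAt (rpow_pos_of_pos hbase _)
  refine ⟨c⁻¹, fun x hx => ?_⟩
  rw [← div_eq_inv_mul, le_div_iff₀' hc]
  exact hcf x hx

theorem symbol_upper_lower_bound_general {M : ℕ} (f : ℝ → ℝ)
    (hper : Function.Periodic f (2 * π)) (hcont : Continuous f)
    (E : Fin M → ℝ) (hErange : ∀ i, E i ∈ Ico (-π) π)
    (hzero : ∀ i, f (E i) = 0)
    (hpos : ∀ x ∈ Icc (-π) π, x ∉ Set.range E → 0 < f x)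
    (β : Fin M → ℝ) (hβpos : ∀ i, 0 < β i)
    (c' : Fin M → ℝ) (hc'pos : ∀ i, 0 < c' i)
    (hlim : ∀ i, Tendsto (fun x => f x / |x - E i| ^ (β i)) (nhdsWithin (E i) {E i}ᶜ)
      (nhds (c' i)))
    (b : ℝ) (i0 : Fin M) (hb : β i0 = b) (hmax : ∀ i, β i ≤ b) :
    ∃ c C : ℝ, 0 < c ∧ c ≤ C ∧ ∀ x ∈ Icc (-π) π,
      c * ∏ i, (2 - 2 * Real.cos (x - E i)) ^ (b / 2) ≤ f x ∧
      f x ≤ C * (2 - 2 * Real.cos (x - E i0)) ^ (b / 2) := by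
  have hπ : π ∉ range E := by
    rintro ⟨j, hj⟩
    exact (hErange j).2.ne hj
  have hEi0 : -π < E i0 := by
    refine (hErange i0).1.lt_of_ne fun h => (hpos π ⟨by linarith [pi_pos], le_rfl⟩ hπ).ne' ?_
    rw [← hzero i0, ← h, ← hper (-π)]
    ring_nf
  have hfnonneg : ∀ x ∈ Icc (-π) π, 0 ≤ f x := fun x hx => by
    by_cases hxE : x ∈ range E
    · obtain ⟨i, rfl⟩ := hxE
      exact (hzero i).ge
    · exact (hpos x hx hxE).le
  obtain ⟨c, hc, hlower⟩ := exists_pos_forall_mul_prod_le isCompact_Icc hcont hzero hpos hβpos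
    hmax (hb ▸ (hβpos i0).le) hc'pos hlim
  obtain ⟨C, hupper⟩ := exists_forall_le_mul_two_sub_two_mul_cos_rpow hcont hfnonneg
    ⟨hEi0, (hErange i0).2⟩ (hzero i0) (hb ▸ hβpos i0) (hb ▸ hlim i0)
  refine ⟨c, max c C, hc, le_max_left _ _, fun x hx => ⟨hlower x hx, (hupper x hx).trans ?_⟩⟩
  exact mul_le_mul_of_nonneg_right (le_max_right _ _)
    (rpow_nonneg (two_sub_two_mul_cos_nonneg _) _)

/-- Upper and lower bounds on a symbol `f` on the torus `[-π,π]` that vanishes exactly at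
finitely many points `E_1,...,E_M`, with algebraic minima of orders `β_i`:
`c ∏_i (2-2cos(x-E_i))^{b/2} ≤ f(x) ≤ C (2-2cos(x-E_{i_0}))^{b/2}` where `b = max_i β_i`. -/
theorem symbol_upper_lower_bound {M : ℕ} (f : ℝ → ℝ)
    (hper : Function.Periodic f (2 * π)) (hcont : Continuous f)
    (E : Fin M → ℝ) (hE : Function.Injective E) (hErange : ∀ i, E i ∈ Ico (-π) π)
    (hzero : ∀ i, f (E i) = 0)
    (hpos : ∀ x ∈ Icc (-π) π, x ∉ Set.range E → 0 < f x)
    (β : Fin M → ℝ) (hβpos : ∀ i, 0 < β i)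
    (c' : Fin M → ℝ) (hc'pos : ∀ i, 0 < c' i)
    (hlim : ∀ i, Tendsto (fun x => f x / |x - E i| ^ (β i)) (nhdsWithin (E i) {E i}ᶜ)
      (nhds (c' i)))
    (b : ℝ) (i0 : Fin M) (hb : β i0 = b) (hmax : ∀ i, β i ≤ b) :
    ∃ c C : ℝ, 0 < c ∧ c ≤ C ∧ ∀ x ∈ Icc (-π) π,
      c * ∏ i, (2 - 2 * Real.cos (x - E i)) ^ (b / 2) ≤ f x ∧
      f x ≤ C * (2 - 2 * Real.cos (x - E i0)) ^ (b / 2) :=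
  symbol_upper_lower_bound_general f hper hcont E hErange hzero hpos β hβpos c' hc'pos hlim b i0 hb
    hmax
end

section
/- Let T be a bounded self-adjoint positive operator on ℓ²(ℤ), Λ ⊂ ℤ, and suppose N ≤ T ≤ D where N = N₁ ⊕ N₂ and D = D₁ ⊕ D₂ are block-diagonal with respect to ℓ²(Λ) ⊕ ℓ²(Λᶜ), with N positive. Then for every β ∈ (0,1], N₁^β ≤ 1_Λ T^β 1_Λ ≤ D₁^β as operators on ℓ²(Λ). -/
open Set

instance : ContinuousFunctionalCalculus ℝ (lp (fun _ : ℤ => ℂ) 2 →L[ℂ] lp (fun _ : ℤ => ℂ) 2)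
    IsSelfAdjoint :=
  IsSelfAdjoint.instContinuousFunctionalCalculus

/-!
Since `N` and `D` commute with the coordinate projection `P`, the functional calculus respects
the block decomposition: `f (P N P) = P f(N) P` whenever `f 0 = 0`. This is an algebraic identity
for polynomials and passes to continuous `f` by Weierstrass approximation on an interval containing
both spectra. Compressing the Löwner–Heinz inequalities `N^β ≤ T^β ≤ D^β` by `P` then gives the
bracketing.
-/

open Polynomial Filter Topology

theorem Polynomial.aeval_mul_of_isIdempotentElem {R A : Type*} [CommSemiring R] [Ring A]
    [Algebra R A] {a p : A} (hap : Commute a p) (hp : IsIdempotentElem p) (Q : R[X]) :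
    aeval (a * p) Q = aeval a Q * p + algebraMap R A (Q.eval 0) * (1 - p) := by
  induction Q using Polynomial.induction_on' with
  | add Q₁ Q₂ h₁ h₂ => simp only [map_add, h₁, h₂, eval_add, add_mul]; abel
  | monomial n c =>
    cases n with
    | zero => simp [mul_sub]
    | succ k =>
      simp only [aeval_monomial, eval_monomial, zero_pow k.succ_ne_zero, mul_zero, map_zero,
        zero_mul, add_zero, hap.mul_pow, hp.pow_succ_eq, mul_assoc]

theorem exists_polynomial_tendstoUniformlyOn_Icc {a b : ℝ} {f : ℝ → ℝ}
    (hf : ContinuousOn f (Icc a b)) :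
    ∃ Q : ℕ → ℝ[X], TendstoUniformlyOn (fun n t ↦ (Q n).eval t) f atTop (Icc a b) := by
  choose Q hQ using fun n : ℕ ↦
    exists_polynomial_near_of_continuousOn a b f hf (1 / (n + 1)) Nat.one_div_pos_of_nat
  refine ⟨Q, Metric.tendstoUniformlyOn_iff.mpr fun ε hε ↦ ?_⟩
  obtain ⟨N, hN⟩ := exists_nat_one_div_lt hε
  filter_upwards [eventually_ge_atTop N] with n hn t ht
  rw [dist_comm, Real.dist_eq]
  refine (hQ n t ht).trans_le (le_trans ?_ hN.le)
  gcongr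

section CStarAlgebra

variable {A : Type*} [CStarAlgebra A]

theorem spectrum_real_subset_Icc_norm (x : A) : spectrum ℝ x ⊆ Icc (-‖x‖) ‖x‖ := by
  nontriviality A
  exact fun _ ht ↦ abs_le.mp (by simpa using spectrum.norm_le_norm_of_mem ht)

theorem cfc_mul_of_commute_of_isStarProjection {a p : A} (ha : IsSelfAdjoint a)
    (hp : IsStarProjection p) (hap : Commute a p) {f : ℝ → ℝ} (hf : Continuous f) :
    cfc f (a * p) = cfc f a * p + algebraMap ℝ A (f 0) * (1 - p) := by
  have hap_sa : IsSelfAdjoint (a * p) := by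
    rw [IsSelfAdjoint, star_mul, hp.isSelfAdjoint.star_eq, ha.star_eq, hap.eq]
  set R := ‖a‖ + ‖a * p‖
  have hspec : ∀ x : A, ‖x‖ ≤ R → spectrum ℝ x ⊆ Icc (-R) R := fun x hx ↦
    (spectrum_real_subset_Icc_norm x).trans (Icc_subset_Icc (neg_le_neg hx) hx)
  obtain ⟨Q, hQ⟩ := exists_polynomial_tendstoUniformlyOn_Icc (hf.continuousOn (s := Icc (-R) R))
  have hlim : ∀ x : A, ‖x‖ ≤ R → Tendsto (fun n ↦ cfc (Q n).eval x) atTop (𝓝 (cfc f x)) :=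
    fun x hx ↦ tendsto_cfc_fun (hQ.mono (hspec x hx)) (.of_forall fun n ↦ (Q n).continuousOn)
  have hQ0 : Tendsto (fun n ↦ (Q n).eval 0) atTop (𝓝 (f 0)) :=
    hQ.tendsto_at ⟨neg_nonpos.mpr (by positivity), by positivity⟩
  have hpoly : ∀ n, cfc (Q n).eval a * p + algebraMap ℝ A ((Q n).eval 0) * (1 - p) =
      cfc (Q n).eval (a * p) := fun n ↦ by
    rw [cfc_polynomial .., cfc_polynomial .., aeval_mul_of_isIdempotentElem hap hp.isIdempotentElem]
  refine tendsto_nhds_unique (hlim _ (le_add_of_nonneg_left (norm_nonneg a))) (.congr hpoly ?_)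
  exact ((hlim a (le_add_of_nonneg_right (norm_nonneg _))).mul_const p).add
    ((((continuous_algebraMap ℝ A).tendsto _).comp hQ0).mul_const _)

theorem cfc_conj_of_commute_of_isStarProjection {a p : A}
    (ha : IsSelfAdjoint a) (hp : IsStarProjection p) (hap : Commute a p) {f : ℝ → ℝ}
    (hf : Continuous f) (hf0 : f 0 = 0) :
    cfc f (p * a * p) = p * cfc f a * p := by
  have hpp := hp.isIdempotentElem.eq
  rw [← hap.eq, mul_assoc, hpp, cfc_mul_of_commute_of_isStarProjection ha hp hap hf, hf0,
    map_zero, zero_mul, add_zero, mul_assoc, (hap.cfc_real f).eq, ← mul_assoc, hpp]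

end CStarAlgebra

theorem isStarProjection_of_apply_eq_indicator {ι 𝕜 : Type*} [RCLike 𝕜] {s : Set ι}
    {P : lp (fun _ : ι ↦ 𝕜) 2 →L[𝕜] lp (fun _ : ι ↦ 𝕜) 2}
    (hP : ∀ x i, P x i = s.indicator (fun j ↦ x j) i) : IsStarProjection P where
  isIdempotentElem := by
    ext x i
    simp only [mul_apply_eq_comp, hP]
    by_cases hi : i ∈ s <;> simp [hi]
  isSelfAdjoint := by
    rw [ContinuousLinearMap.isSelfAdjoint_iff_isSymmetric]
    intro x y
    simp only [ContinuousLinearMap.coe_coe, lp.inner_eq_tsum, hP]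
    congr! 2 with i
    by_cases hi : i ∈ s <;> simp [hi]

theorem cfc_rpow_conj_bracketing {A : Type*} [CStarAlgebra A] [PartialOrder A]
    [StarOrderedRing A] {p n t d : A} (hp : IsStarProjection p) (hn : 0 ≤ n)
    (hnp : Commute n p) (hdp : Commute d p) (hnt : n ≤ t) (htd : t ≤ d) {β : ℝ} (hβ0 : 0 < β)
    (hβ1 : β ≤ 1) :
    cfc (fun s : ℝ ↦ s ^ β) (p * n * p) ≤ p * cfc (fun s : ℝ ↦ s ^ β) t * p ∧
      p * cfc (fun s : ℝ ↦ s ^ β) t * p ≤ cfc (fun s : ℝ ↦ s ^ β) (p * d * p) := by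
  have ht : 0 ≤ t := hn.trans hnt
  have hd : 0 ≤ d := ht.trans htd
  have hf : Continuous fun s : ℝ ↦ s ^ β := continuous_id.rpow_const fun _ ↦ Or.inr hβ0.le
  have hf0 : (0 : ℝ) ^ β = 0 := Real.zero_rpow hβ0.ne'
  rw [cfc_conj_of_commute_of_isStarProjection hn.isSelfAdjoint hp hnp hf hf0,
    cfc_conj_of_commute_of_isStarProjection hd.isSelfAdjoint hp hdp hf hf0,
    ← CFC.rpow_eq_cfc_real hn, ← CFC.rpow_eq_cfc_real ht, ← CFC.rpow_eq_cfc_real hd]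
  have hβ : β ∈ Icc (0 : ℝ) 1 := ⟨hβ0.le, hβ1⟩
  exact ⟨hp.isSelfAdjoint.conjugate_le_conjugate (CFC.rpow_le_rpow hβ hnt),
    hp.isSelfAdjoint.conjugate_le_conjugate (CFC.rpow_le_rpow hβ htd)⟩

theorem power_bracketing_blockDiagonal_general
    (Λ : Set ℤ) (P : lp (fun _ : ℤ => ℂ) 2 →L[ℂ] lp (fun _ : ℤ => ℂ) 2)
    (hP : ∀ (x : lp (fun _ : ℤ => ℂ) 2) (n : ℤ), P x n = Λ.indicator (fun m => x m) n)
    (T N D : lp (fun _ : ℤ => ℂ) 2 →L[ℂ] lp (fun _ : ℤ => ℂ) 2)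
    (hN0 : 0 ≤ N)
    (hNcomm : N * P = P * N) (hDcomm : D * P = P * D)
    (hNT : N ≤ T) (hTD : T ≤ D)
    (β : ℝ) (hβ0 : 0 < β) (hβ1 : β ≤ 1) :
    cfc (fun t : ℝ => t ^ β) (P * N * P) ≤ P * cfc (fun t : ℝ => t ^ β) T * P ∧
      P * cfc (fun t : ℝ => t ^ β) T * P ≤ cfc (fun t : ℝ => t ^ β) (P * D * P) :=
  cfc_rpow_conj_bracketing (isStarProjection_of_apply_eq_indicator hP) hN0 hNcomm hDcomm hNT hTD
    hβ0 hβ1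

/-- If `N ≤ T ≤ D` on `ℓ²(ℤ)` with `N, D` block-diagonal w.r.t. `ℓ²(Λ) ⊕ ℓ²(Λᶜ)` and
`N` positive, then for `β ∈ (0,1]` one has `N₁^β ≤ 1_Λ T^β 1_Λ ≤ D₁^β` on `ℓ²(Λ)`,
where `N₁ = 1_Λ N 1_Λ`, `D₁ = 1_Λ D 1_Λ` and powers are given by functional calculus. -/
theorem power_bracketing_blockDiagonal
    (Λ : Set ℤ) (P : lp (fun _ : ℤ => ℂ) 2 →L[ℂ] lp (fun _ : ℤ => ℂ) 2)
    (hP : ∀ (x : lp (fun _ : ℤ => ℂ) 2) (n : ℤ), P x n = Λ.indicator (fun m => x m) n)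
    (T N D : lp (fun _ : ℤ => ℂ) 2 →L[ℂ] lp (fun _ : ℤ => ℂ) 2)
    (hT : IsSelfAdjoint T) (hN : IsSelfAdjoint N) (hD : IsSelfAdjoint D)
    (hT0 : 0 ≤ T) (hN0 : 0 ≤ N)
    (hNcomm : N * P = P * N) (hDcomm : D * P = P * D)
    (hNT : N ≤ T) (hTD : T ≤ D)
    (β : ℝ) (hβ0 : 0 < β) (hβ1 : β ≤ 1) :
    cfc (fun t : ℝ => t ^ β) (P * N * P) ≤ P * cfc (fun t : ℝ => t ^ β) T * P ∧
      P * cfc (fun t : ℝ => t ^ β) T * P ≤ cfc (fun t : ℝ => t ^ β) (P * D * P) :=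
  power_bracketing_blockDiagonal_general Λ P hP T N D hN0 hNcomm hDcomm hNT hTD β hβ0 hβ1
end
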